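/- There exist a constant C > 0 and an integer n₀ such that for all n ≥ n₀ and all integers k with 1 ≤ k ≤ n−1, |N(n,k) − (n+k−3 + k/(2(n+k)))·N(n,k−1)| ≤ (C/n)·N(n,k−1). -/

import Mathlib

/-!
Splitting off the term `d = 1`, the recurrence reads
`N(n,k+2) = (n+k-1) N(n,k+1) + (k+1)/2 (N(n,k) + N(n-1,k)) - T(n,k)/2`,
where the tail `T(n,k) = tailSum n k` collects the terms `d ≥ 2`.
By induction on `k` one proves the ratio bounds `n+k-2 ≤ N(n,k+1) / N(n,k) ≤ n+k-1`
for `k + 2 ≤ n`. They make `N(·,k)` grow by a factor `≥ 2n-3` in `n`, so consecutive terms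
of the tail shrink by a factor `≥ 2` and `0 ≤ T(n,k) ≤ N(n,k)`; this is exactly what the next
step of the induction needs. Fed back into the recurrence, the same bounds leave an error of at
most `2 N(n,k) ≤ (6/n) N(n,k+1)`.
-/

/-- Odd double factorial: `ddf m` equals `m!!` for odd `m`, and `ddf 0 = 1`
(so that `ddf (2*n - 5)` with truncated subtraction encodes `(2n-5)!!`
with the convention `(-1)!! = 1`). -/
def ddf : ℕ → ℚ
  | 0 => 1
  | 1 => 1
  | n + 2 => (n + 2) * ddf n

/-- `N n k` is the number of one-component galled networks with `n - 1` leaves whose `k`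
reticulation-node children are labeled `1, …, k`, defined by the initial values
`N(n,0) = (2n-5)!!`, `N(n,1) = (n-2)(2n-5)!!` and the Gunawan--Rathin--Zhang recurrence. -/
def N : ℕ → ℕ → ℚ
  | n, 0 => ddf (2 * n - 5)
  | n, 1 => ((n : ℚ) - 2) * ddf (2 * n - 5)
  | n, k + 2 =>
      ((n : ℚ) + (k + 2) - 3) * N n (k + 1) + ((k : ℚ) + 1) * N n k
        + (1 / 2) * ∑ d ∈ Finset.Icc 1 (k + 1),
            (((k + 1).choose d : ℚ)) * ddf (2 * d - 1) *
              (N (n - d) (k + 1 - d) - N (n - d + 1) (k + 1 - d))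
  termination_by n k => k
  decreasing_by all_goals omega

open Finset

lemma ddf_pos (m : ℕ) : 0 < ddf m := by
  induction m using ddf.induct with
  | case1 | case2 => norm_num [ddf]
  | case3 n ih => rw [ddf]; positivity

lemma ddf_two_mul_add_one {d : ℕ} (hd : 1 ≤ d) :
    ddf (2 * d + 1) = (2 * d + 1) * ddf (2 * d - 1) := by
  obtain ⟨e, rfl⟩ : ∃ e, d = e + 1 := ⟨d - 1, by omega⟩
  rw [show 2 * (e + 1) + 1 = 2 * e + 1 + 2 by ring, ddf,
    show 2 * (e + 1) - 1 = 2 * e + 1 by omega]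
  push_cast; ring

lemma N_zero (n : ℕ) : N n 0 = ddf (2 * n - 5) := by rw [N]

lemma N_one (n : ℕ) : N n 1 = ((n : ℚ) - 2) * ddf (2 * n - 5) := by rw [N]

lemma N_succ_zero {m : ℕ} (hm : 2 ≤ m) : N (m + 1) 0 = (2 * m - 3) * N m 0 := by
  rcases hm.eq_or_lt with rfl | hm
  · norm_num [N_zero, ddf]
  · rw [N_zero, N_zero, show 2 * (m + 1) - 5 = 2 * m - 5 + 2 by omega, ddf]
    push_cast [show 5 ≤ 2 * m by omega]
    ring

def tailSum (n k : ℕ) : ℚ :=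
  ∑ d ∈ Icc 2 (k + 1), ((k + 1).choose d : ℚ) * ddf (2 * d - 1) *
    (N (n - d + 1) (k + 1 - d) - N (n - d) (k + 1 - d))

lemma N_add_two_eq {n : ℕ} (hn : 1 ≤ n) (k : ℕ) :
    N n (k + 2) = (n + k - 1) * N n (k + 1) + (k + 1) / 2 * (N n k + N (n - 1) k)
      - tailSum n k / 2 := by
  have htail : tailSum n k = -∑ d ∈ Icc 2 (k + 1), ((k + 1).choose d : ℚ) * ddf (2 * d - 1) *
      (N (n - d) (k + 1 - d) - N (n - d + 1) (k + 1 - d)) := by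
    simp only [tailSum, ← sum_neg_distrib, ← mul_neg, neg_sub]
  rw [N, Icc_eq_cons_Ioc (by omega), sum_cons, ← Icc_add_one_left_eq_Ioc, htail]
  simp only [Nat.choose_one_right, Nat.add_sub_cancel, Nat.sub_add_cancel hn]
  norm_num [ddf]
  ring

def RatioBounds (K : ℕ) : Prop :=
  ∀ j < K, ∀ m : ℕ, j + 2 ≤ m →
    (m + j - 2) * N m j ≤ N m (j + 1) ∧ N m (j + 1) ≤ (m + j - 1) * N m j

namespace RatioBounds

variable {K : ℕ}

lemma pos (hK : RatioBounds K) {j m : ℕ} (hj : j ≤ K) (hjm : j + 2 ≤ m) : 0 < N m j := by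
  induction j with
  | zero => rw [N_zero]; exact ddf_pos _
  | succ j ih =>
    have hm : (j : ℚ) + 3 ≤ m := by exact_mod_cast hjm
    calc (0 : ℚ) < (m + j - 2) * N m j := mul_pos (by linarith) (ih (by omega) (by omega))
      _ ≤ N m (j + 1) := (hK j (by omega) m (by omega)).1

lemma growth (hK : RatioBounds K) {j m : ℕ} (hj : j ≤ K) (hjm : j + 2 ≤ m) :
    (2 * m - 3) * N m j ≤ N (m + 1) j := by
  induction j with
  | zero => rw [N_succ_zero hjm]
  | succ j ih =>
    have hm : (j : ℚ) + 3 ≤ m := by exact_mod_cast hjm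
    have hup := (hK j (by omega) m (by omega)).2
    have hlo := (hK j (by omega) (m + 1) (by omega)).1
    have hgr := ih (by omega) (by omega)
    push_cast at hlo
    calc (2 * m - 3) * N m (j + 1) ≤ (2 * m - 3) * ((m + j - 1) * N m j) := by gcongr; linarith
      _ = (m + j - 1) * ((2 * m - 3) * N m j) := by ring
      _ ≤ (m + j - 1) * N (m + 1) j := by gcongr; linarith
      _ ≤ N (m + 1) (j + 1) := by linarith

lemma mono (hK : RatioBounds K) {j m : ℕ} (hj : j ≤ K) (hjm : j + 2 ≤ m) :
    N m j ≤ N (m + 1) j := by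
  have hm : (2 : ℚ) ≤ m := by exact_mod_cast (by omega : 2 ≤ m)
  nlinarith [hK.pos hj hjm, hK.growth hj hjm]

lemma diag (hK : RatioBounds K) {j m : ℕ} (hj : j < K) (hjm : j + 2 ≤ m) :
    (m + j - 1) * (2 * m - 3) * N m j ≤ N (m + 1) (j + 1) := by
  have hm : (2 : ℚ) ≤ m := by exact_mod_cast (by omega : 2 ≤ m)
  have hlo := (hK j hj (m + 1) (by omega)).1
  push_cast at hlo
  calc (m + j - 1) * (2 * m - 3) * N m j = (m + j - 1) * ((2 * m - 3) * N m j) := by ring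
    _ ≤ (m + j - 1) * N (m + 1) j :=
      mul_le_mul_of_nonneg_left (hK.growth hj.le hjm) (by linarith)
    _ ≤ N (m + 1) (j + 1) := by linarith

lemma tail_term_two_le (hK : RatioBounds K) {n k : ℕ} (hk : k ≤ K) (hk1 : 1 ≤ k)
    (hkn : k + 3 ≤ n) :
    ((k + 1).choose 2 : ℚ) * ddf (2 * 2 - 1) * N (n - 2 + 1) (k + 1 - 2) ≤ N n k / 2 := by
  obtain ⟨j, rfl⟩ : ∃ j, k = j + 1 := ⟨k - 1, by omega⟩
  obtain ⟨m, rfl⟩ : ∃ m, n = m + 1 := ⟨n - 1, by omega⟩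
  rw [show m + 1 - 2 + 1 = m by omega, show j + 1 + 1 - 2 = j by omega, Nat.cast_choose_two]
  have hdiag := hK.diag (j := j) (m := m) (by omega) (by omega)
  have hpos := hK.pos (j := j) (m := m) (by omega) (by omega)
  have hm : (j : ℚ) + 3 ≤ m := by exact_mod_cast (by omega : j + 3 ≤ m)
  have hnum : 3 * ((j : ℚ) + 2) * (j + 1) ≤ (m + j - 1) * (2 * m - 3) := by nlinarith
  norm_num [ddf]
  nlinarith [mul_le_mul_of_nonneg_right hnum hpos.le]

lemma tail_term_succ_le (hK : RatioBounds K) {n k d : ℕ} (hk : k ≤ K) (hkn : k + 3 ≤ n)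
    (hd : 1 ≤ d) (hdk : d ≤ k) :
    ((k + 1).choose (d + 1) : ℚ) * ddf (2 * (d + 1) - 1) * N (n - (d + 1) + 1) (k + 1 - (d + 1))
      ≤ ((k + 1).choose d : ℚ) * ddf (2 * d - 1) * N (n - d + 1) (k + 1 - d) / 2 := by
  obtain ⟨j, rfl⟩ : ∃ j, k = d + j := ⟨k - d, by omega⟩
  obtain ⟨m, rfl⟩ : ∃ m, n = d + m := ⟨n - d, by omega⟩
  have hchoose := Nat.choose_succ_right_eq (d + j + 1) d
  rw [show d + j + 1 - d = j + 1 by omega] at hchoose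
  rw [show d + m - (d + 1) + 1 = m by omega, show d + j + 1 - (d + 1) = j by omega,
    show d + m - d + 1 = m + 1 by omega, show d + j + 1 - d = j + 1 by omega,
    show 2 * (d + 1) - 1 = 2 * d + 1 by omega, ddf_two_mul_add_one hd]
  have hchooseQ : ((d + j + 1).choose (d + 1) : ℚ) * (d + 1)
      = ((d + j + 1).choose d : ℚ) * (j + 1) := by exact_mod_cast hchoose
  have hdiag := hK.diag (j := j) (m := m) (by omega) (by omega)
  have hpos := hK.pos (j := j) (m := m) (by omega) (by omega)
  have hm : (j : ℚ) + 3 ≤ m := by exact_mod_cast (by omega : j + 3 ≤ m)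
  have hprod : 6 * ((j : ℚ) + 1) ≤ (m + j - 1) * (2 * m - 3) := by nlinarith
  have hnum : ((j : ℚ) + 1) * (2 * d + 1) ≤ (d + 1) / 2 * ((m + j - 1) * (2 * m - 3)) := by
    nlinarith
  set c : ℚ := ((d + j + 1).choose d : ℚ)
  set D := ddf (2 * d - 1)
  have hc : 0 ≤ c * D := mul_nonneg (Nat.cast_nonneg _) (ddf_pos _).le
  refine le_of_mul_le_mul_left ?_ (by positivity : (0 : ℚ) < d + 1)
  calc ((d : ℚ) + 1) * (((d + j + 1).choose (d + 1) : ℚ) * ((2 * d + 1) * D) * N m j)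
      = c * D * (((j : ℚ) + 1) * (2 * d + 1)) * N m j := by
        linear_combination (2 * d + 1) * D * N m j * hchooseQ
    _ ≤ c * D * ((d + 1) / 2 * ((m + j - 1) * (2 * m - 3))) * N m j := by gcongr
    _ = (d + 1) / 2 * (c * D) * ((m + j - 1) * (2 * m - 3) * N m j) := by ring
    _ ≤ (d + 1) / 2 * (c * D) * N (m + 1) (j + 1) := by gcongr
    _ = (d + 1) * (c * D * N (m + 1) (j + 1) / 2) := by ring

lemma tail_term_le (hK : RatioBounds K) {n k d : ℕ} (hk : k ≤ K) (hkn : k + 3 ≤ n)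
    (hd : 2 ≤ d) (hdk : d ≤ k + 1) :
    ((k + 1).choose d : ℚ) * ddf (2 * d - 1) * N (n - d + 1) (k + 1 - d)
      ≤ 2 * (1 / 2) ^ d * N n k := by
  induction d, hd using Nat.le_induction with
  | base => linarith [hK.tail_term_two_le hk (by omega) hkn]
  | succ d hd ih =>
    calc _ ≤ ((k + 1).choose d : ℚ) * ddf (2 * d - 1) * N (n - d + 1) (k + 1 - d) / 2 :=
          hK.tail_term_succ_le hk hkn (by omega) (by omega)
      _ ≤ 2 * (1 / 2) ^ d * N n k / 2 := by linarith [ih (by omega)]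
      _ = 2 * (1 / 2) ^ (d + 1) * N n k := by ring

lemma tailSum_nonneg (hK : RatioBounds K) {n k : ℕ} (hk : k ≤ K) (hkn : k + 3 ≤ n) :
    0 ≤ tailSum n k := by
  refine sum_nonneg fun d hd => ?_
  rw [mem_Icc] at hd
  have hmono := hK.mono (j := k + 1 - d) (m := n - d) (by omega) (by omega)
  have := ddf_pos (2 * d - 1)
  have : 0 ≤ N (n - d + 1) (k + 1 - d) - N (n - d) (k + 1 - d) := by linarith
  positivity

lemma tailSum_le (hK : RatioBounds K) {n k : ℕ} (hk : k ≤ K) (hkn : k + 3 ≤ n) :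
    tailSum n k ≤ N n k := by
  have hgeom : ∑ d ∈ Ico 2 (k + 2), (1 / 2 : ℚ) ^ d ≤ 1 / 2 := by
    have := geom_sum_Ico_le_of_lt_one (m := 2) (n := k + 2) (x := (1 / 2 : ℚ)) (by norm_num)
      (by norm_num)
    norm_num at this ⊢
    linarith
  have hN := hK.pos hk (by omega : k + 2 ≤ n)
  calc tailSum n k
      ≤ ∑ d ∈ Icc 2 (k + 1),
          ((k + 1).choose d : ℚ) * ddf (2 * d - 1) * N (n - d + 1) (k + 1 - d) := by
        refine sum_le_sum fun d hd => ?_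
        rw [mem_Icc] at hd
        have hpos := hK.pos (j := k + 1 - d) (m := n - d) (by omega) (by omega)
        have := ddf_pos (2 * d - 1)
        rw [mul_sub]
        exact sub_le_self _ (mul_nonneg (by positivity) hpos.le)
    _ ≤ ∑ d ∈ Icc 2 (k + 1), 2 * N n k * (1 / 2) ^ d := by
        refine sum_le_sum fun d hd => ?_
        rw [mem_Icc] at hd
        linarith [hK.tail_term_le hk hkn hd.1 hd.2]
    _ ≤ ∑ d ∈ Ico 2 (k + 2), 2 * N n k * (1 / 2) ^ d :=
        sum_le_sum_of_subset_of_nonneg (Icc_subset_Ico_right (by omega)) fun _ _ _ => by positivity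
    _ ≤ N n k := by rw [← mul_sum]; nlinarith

end RatioBounds

lemma RatioBounds.bounds_add_two {k : ℕ} (hK : RatioBounds (k + 1)) {m : ℕ} (hm : k + 3 ≤ m) :
    (m + k - 1) * N m (k + 1) ≤ N m (k + 2) ∧ N m (k + 2) ≤ (m + k) * N m (k + 1) := by
  have hmQ : (k : ℚ) + 3 ≤ m := by exact_mod_cast hm
  have hX := hK.pos (j := k) (m := m) (by omega) (by omega)
  have hY := hK.pos (j := k) (m := m - 1) (by omega) (by omega)
  have hYX := hK.mono (j := k) (m := m - 1) (by omega) (by omega)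
  rw [Nat.sub_add_cancel (by omega)] at hYX
  have hZ := (hK k (by omega) m (by omega)).1
  have hT := hK.tailSum_le (n := m) (k := k) (by omega) hm
  have hT₀ := hK.tailSum_nonneg (n := m) (k := k) (by omega) hm
  rw [N_add_two_eq (by omega)]
  constructor <;> nlinarith

lemma RatioBounds.succ {K : ℕ} (hK : RatioBounds K) : RatioBounds (K + 1) := by
  intro j hj m hjm
  rcases Nat.lt_succ_iff_lt_or_eq.mp hj with hj | rfl
  · exact hK j hj m hjm
  rcases j with _ | k
  · have hm : (2 : ℚ) ≤ m := by exact_mod_cast hjm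
    have := ddf_pos (2 * m - 5)
    rw [N_one, N_zero]
    push_cast
    constructor <;> nlinarith
  · push_cast
    rw [show m + (k + 1 : ℚ) - 2 = m + k - 1 by ring, show m + (k + 1 : ℚ) - 1 = m + k by ring]
    exact hK.bounds_add_two (by omega)

theorem ratioBounds (K : ℕ) : RatioBounds K := by
  induction K with
  | zero => intro j hj; omega
  | succ K ih => exact ih.succ

lemma N_pos {m j : ℕ} (h : j + 2 ≤ m) : 0 < N m j := (ratioBounds j).pos le_rfl h

lemma abs_N_add_two_sub_le {n k : ℕ} (hkn : k + 3 ≤ n) :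
    |N n (k + 2) - (n + (k + 2) - 3 + (k + 2) / (2 * (n + (k + 2)))) * N n (k + 1)|
      ≤ 2 * N n k := by
  have hK := ratioBounds (k + 1)
  have hnQ : (k : ℚ) + 3 ≤ n := by exact_mod_cast hkn
  have hX := hK.pos (j := k) (m := n) (by omega) (by omega)
  have hY := hK.pos (j := k) (m := n - 1) (by omega) (by omega)
  have hYX := hK.growth (j := k) (m := n - 1) (by omega) (by omega)
  rw [Nat.sub_add_cancel (by omega), Nat.cast_pred (by omega)] at hYX
  obtain ⟨hZ₁, hZ₂⟩ := hK k (by omega) n (by omega)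
  have hT := hK.tailSum_le (n := n) (k := k) (by omega) hkn
  have hT₀ := hK.tailSum_nonneg (n := n) (k := k) (by omega) hkn
  set q : ℚ := (k + 2) / (2 * (n + (k + 2)))
  have hP : (0 : ℚ) < 2 * (n + (k + 2)) := by positivity
  have hq₁ : q * (n + k - 1) ≤ (k + 2) / 2 := by
    rw [div_mul_eq_mul_div, div_le_div_iff₀ hP (by norm_num)]; nlinarith
  have hq₂ : (k + 2) / 2 - 2 ≤ q * (n + k - 2) := by
    rw [div_mul_eq_mul_div, le_div_iff₀ hP]; nlinarith
  have hqZ₁ : q * ((n + k - 2) * N n k) ≤ q * N n (k + 1) := by gcongr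
  have hqZ₂ : q * N n (k + 1) ≤ q * ((n + k - 1) * N n k) := by gcongr
  rw [N_add_two_eq (by omega), abs_le]
  constructor <;> nlinarith

lemma abs_N_one_sub_eq (n : ℕ) :
    |N n 1 - (n + 1 - 3 + 1 / (2 * (n + 1))) * N n 0| = N n 0 / (2 * (n + 1)) := by
  have := ddf_pos (2 * n - 5)
  rw [N_one, N_zero, show (n - 2 : ℚ) * ddf (2 * n - 5) - (n + 1 - 3 + 1 / (2 * (n + 1))) *
    ddf (2 * n - 5) = -(ddf (2 * n - 5) / (2 * (n + 1))) by ring, abs_neg,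
    abs_of_pos (by positivity)]

/-- There are `C > 0` and `n₀` such that for all `n ≥ n₀` and `1 ≤ k ≤ n - 1`,
`|N(n,k) - (n + k - 3 + k/(2(n+k))) N(n,k-1)| ≤ (C/n) N(n,k-1)`. -/
theorem N_approx_recurrence :
    ∃ C : ℚ, 0 < C ∧ ∃ n₀ : ℕ, ∀ n : ℕ, n₀ ≤ n → ∀ k : ℕ, 1 ≤ k → k ≤ n - 1 →
      |N n k - ((n : ℚ) + k - 3 + (k : ℚ) / (2 * ((n : ℚ) + k))) * N n (k - 1)|
        ≤ C / n * N n (k - 1) := by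
  refine ⟨6, by norm_num, 0, fun n _ k hk hkn => ?_⟩
  have hn : (1 : ℚ) ≤ n := by exact_mod_cast (by omega : 1 ≤ n)
  obtain rfl | ⟨k, rfl⟩ : k = 1 ∨ ∃ j, k = j + 2 := by
    rcases Nat.lt_or_ge k 2 with h | h
    exacts [.inl (by omega), .inr ⟨k - 2, by omega⟩]
  · have := ddf_pos (2 * n - 5)
    rw [Nat.cast_one, Nat.sub_self, abs_N_one_sub_eq, N_zero, div_mul_eq_mul_div,
      div_le_div_iff₀ (by positivity) (by positivity)]
    nlinarith
  · have hnQ : (k : ℚ) + 3 ≤ n := by exact_mod_cast (by omega : k + 3 ≤ n)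
    have hX := N_pos (j := k) (m := n) (by omega)
    have hZ := (ratioBounds (k + 1) k (by omega) n (by omega)).1
    push_cast
    calc _ ≤ 2 * N n k := abs_N_add_two_sub_le (by omega)
      _ ≤ 6 / n * N n (k + 1) := by
        rw [div_mul_eq_mul_div, le_div_iff₀ (by linarith)]
        nlinarith
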